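/- Let d ≥ 1 and n ≥ 1 be integers, p, T, ε > 0, ξ ∈ ℝ^d with |ξ| = 1, let a_0 be a Schwartz function on ℝ^d, let β : ℝ^d → ℝ be smooth, and let G(x) = Σ_{k≥1} (a_k/k!) x^k be a power series with real coefficients converging absolutely for |x| < R (R > 0). Assume ε^{2p} sup_x |a_0(x)|² < R. Define a(t,x) = a_0(x + ε^{1−2n} t ξ) · exp(−i ε^{−2n} G(ε^{2p} |a_0(x + ε^{1−2n} t ξ)|²) ∫_0^t β(ε^{−1} x + ε^{−2n}(t−s) ξ − T ξ) ds). Then a is continuously differentiable on ℝ × ℝ^d, a(0,x) = a_0(x) for all x, and a satisfies the transport equation i ∂_t a(t,x) − i ε^{1−2n} ξ · ∇_x a(t,x) − ε^{−2n} β(ε^{−1} x − T ξ) G(ε^{2p} |a(t,x)|²) a(t,x) = 0 for all (t,x) ∈ ℝ × ℝ^d. -/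

import Mathlib

open MeasureTheory

/-- The power series nonlinearity `G(x) = Σ_{k≥1} (a_k/k!) x^k`. -/
noncomputable def Gser (c : ℕ → ℝ) (x : ℝ) : ℝ :=
  ∑' k : ℕ, c (k + 1) / (k + 1).factorial * x ^ (k + 1)

/-- The explicit amplitude
`a(t,x) = a₀(x + ε^{1−2n} t ξ)
  exp(−i ε^{−2n} G(ε^{2p}|a₀(x + ε^{1−2n} t ξ)|²) ∫_0^t β(ε^{−1}x + ε^{−2n}(t−s)ξ − Tξ) ds)`. -/
noncomputable def aFun (d n : ℕ) (p T : ℝ) (ξ : EuclideanSpace ℝ (Fin d))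
    (a₀ : SchwartzMap (EuclideanSpace ℝ (Fin d)) ℂ) (β : EuclideanSpace ℝ (Fin d) → ℝ)
    (c : ℕ → ℝ) (ε t : ℝ) (x : EuclideanSpace ℝ (Fin d)) : ℂ :=
  a₀ (x + (ε ^ ((1 : ℝ) - 2 * (n : ℝ)) * t) • ξ) *
    Complex.exp (-Complex.I * Complex.ofReal (ε ^ (-(2 * (n : ℝ)))) *
      Complex.ofReal (Gser c (ε ^ (2 * p) * ‖a₀ (x + (ε ^ ((1 : ℝ) - 2 * (n : ℝ)) * t) • ξ)‖ ^ 2)) *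
      Complex.ofReal (∫ s in (0 : ℝ)..t, β (ε⁻¹ • x + (ε ^ (-(2 * (n : ℝ))) * (t - s)) • ξ - T • ξ)))

/-- The partial derivative `∂_{x_i}`. -/
noncomputable def pderiv' {d : ℕ} (i : Fin d) (u : EuclideanSpace ℝ (Fin d) → ℂ) :
    EuclideanSpace ℝ (Fin d) → ℂ :=
  fun x => fderiv ℝ u x (EuclideanSpace.single i 1)

/-! Along the characteristic line `r ↦ (t + r, x - r ε^{1-2n} ξ)` the argument
`x + ε^{1-2n} t ξ` of `a₀` is constant and, because `ε⁻¹ ε^{1-2n} = ε^{-2n}`, so is the integrand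
of the phase: only the upper limit `t + r` of the phase integral moves. The transport derivative
`∂_t - ε^{1-2n} ξ·∇_x a` is the derivative along that line, hence by the fundamental theorem of
calculus equals `-i ε^{-2n} G(ε^{2p}|a₀|²) β(ε⁻¹x - Tξ) a`; and `|a| = |a₀(x + ε^{1-2n} t ξ)|`
because the phase is real. Joint `C¹` regularity comes from differentiating the phase integral
under the integral sign after rescaling it to `[0, 1]`, and from the analyticity of `G` on its
disc of convergence, which contains the range of `ε^{2p}|a₀|²`. -/

open FormalMultilinearSeries

theorem Gser_eq_mul_ofScalarsSum (c : ℕ → ℝ) :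
    Gser c = fun x => x * ofScalarsSum (E := ℝ) (fun k => c (k + 1) / (k + 1).factorial) x := by
  ext x
  rw [Gser, ofScalars_sum_eq, ← tsum_mul_left]
  congr 1 with k
  rw [smul_eq_mul, pow_succ]
  ring

theorem ofReal_le_radius_ofScalars {b : ℕ → ℝ} {R : ℝ}
    (hb : ∀ x : ℝ, |x| < R → Summable fun k => |b k| * |x| ^ (k + 1)) :
    ENNReal.ofReal R ≤ (ofScalars ℝ b).radius := by
  refine ENNReal.le_of_forall_nnreal_lt fun r hr => ?_
  rcases eq_or_ne r 0 with rfl | hr0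
  · simp
  have hrR : (r : ℝ) < R := by
    rwa [← ENNReal.ofReal_coe_nnreal, ENNReal.ofReal_lt_ofReal_iff_of_nonneg r.coe_nonneg] at hr
  refine le_radius_of_summable_norm _ ?_
  have hs := (hb r (by rwa [abs_of_nonneg r.coe_nonneg])).div_const (r : ℝ)
  refine hs.congr fun k => ?_
  have : (r : ℝ) ≠ 0 := by exact_mod_cast hr0
  rw [ofScalars_norm, Real.norm_eq_abs, abs_of_nonneg r.coe_nonneg]
  field_simp
  ring

theorem analyticAt_Gser {c : ℕ → ℝ} {R : ℝ}
    (hconv : ∀ x : ℝ, |x| < R →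
      Summable fun k : ℕ => |c (k + 1)| / (k + 1).factorial * |x| ^ (k + 1))
    {x : ℝ} (hx : |x| < R) : AnalyticAt ℝ (Gser c) x := by
  set b : ℕ → ℝ := fun k => c (k + 1) / (k + 1).factorial
  have hrad : ENNReal.ofReal R ≤ (ofScalars ℝ b).radius := by
    refine ofReal_le_radius_ofScalars fun y hy => (hconv y hy).congr fun k => ?_
    simp only [b, abs_div, Nat.abs_cast]
  have hxR : x ∈ Metric.eball 0 (ofScalars ℝ b).radius := by
    rw [Metric.mem_eball, edist_zero_right]
    refine lt_of_lt_of_le ?_ hrad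
    rw [← ofReal_norm]
    exact ENNReal.ofReal_lt_ofReal_iff'.2 ⟨hx, (abs_nonneg x).trans_lt hx⟩
  rw [Gser_eq_mul_ofScalarsSum]
  exact analyticAt_id.mul ((ofScalars ℝ b).analyticOnNhd x hxR)

theorem contDiff_Gser_comp {X : Type*} [NormedAddCommGroup X] [NormedSpace ℝ X]
    {c : ℕ → ℝ} {R : ℝ}
    (hconv : ∀ x : ℝ, |x| < R →
      Summable fun k : ℕ => |c (k + 1)| / (k + 1).factorial * |x| ^ (k + 1))
    {k : WithTop ℕ∞} {u : X → ℝ} (hu : ContDiff ℝ k u) (huR : ∀ y, |u y| < R) :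
    ContDiff ℝ k fun y => Gser c (u y) :=
  contDiff_iff_contDiffAt.2 fun y =>
    (analyticAt_Gser hconv (huR y)).contDiffAt.comp y hu.contDiffAt

theorem SchwartzMap.mul_norm_sq_le_iSup {E F : Type*} [NormedAddCommGroup E] [NormedSpace ℝ E]
    [NormedAddCommGroup F] [NormedSpace ℝ F] (f : SchwartzMap E F) {l : ℝ} (hl : 0 ≤ l) (y : E) :
    l * ‖f y‖ ^ 2 ≤ ⨆ x, l * ‖f x‖ ^ 2 := by
  refine le_ciSup (f := fun x => l * ‖f x‖ ^ 2) ⟨l * SchwartzMap.seminorm ℝ 0 0 f ^ 2, ?_⟩ y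
  rintro _ ⟨x, rfl⟩
  dsimp only
  gcongr
  exact f.norm_le_seminorm ℝ x

section ParametricIntegral

variable {H E : Type*} [NormedAddCommGroup H] [NormedSpace ℝ H] [ProperSpace H]
  [NormedAddCommGroup E] [NormedSpace ℝ E]

theorem contDiff_one_intervalIntegral_of_contDiff_uncurry {g : H → ℝ → E}
    (hg : ContDiff ℝ 1 (Function.uncurry g)) (a b : ℝ) :
    ContDiff ℝ 1 fun x => ∫ s in a..b, g x s := by
  set D : H → ℝ → H →L[ℝ] E :=
    fun x s => (fderiv ℝ (Function.uncurry g) (x, s)).comp (ContinuousLinearMap.inl ℝ H ℝ)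
  have hD : Continuous (Function.uncurry D) :=
    (hg.continuous_fderiv one_ne_zero).clm_comp continuous_const
  have hgD (x : H) (s : ℝ) : HasFDerivAt (g · s) (D x s) x :=
    (hg.differentiable one_ne_zero (x, s)).hasFDerivAt.comp (g := Function.uncurry g)
      (f := fun x => (x, s)) x (hasFDerivAt_prodMk_left x s)
  have hderiv (x₀ : H) : HasFDerivAt (fun x => ∫ s in a..b, g x s) (∫ s in a..b, D x₀ s) x₀ := by
    obtain ⟨C, hC⟩ : ∃ C, ∀ z ∈ Metric.closedBall x₀ 1 ×ˢ Set.uIcc a b,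
        ‖Function.uncurry D z‖ ≤ C :=
      ((isCompact_closedBall x₀ 1).prod isCompact_uIcc).exists_bound_of_continuousOn
        hD.continuousOn
    refine intervalIntegral.hasFDerivAt_integral_of_dominated_of_fderiv_le (bound := fun _ => C)
      (Metric.ball_mem_nhds x₀ one_pos) ?_ ?_ ?_ ?_ intervalIntegrable_const ?_
    · exact Filter.Eventually.of_forall fun x =>
        (hg.continuous.uncurry_left x).aestronglyMeasurable
    · exact (hg.continuous.uncurry_left x₀).intervalIntegrable a b
    · exact (hD.uncurry_left x₀).aestronglyMeasurable
    · exact Filter.Eventually.of_forall fun s hs x hx =>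
        hC (x, s) ⟨Metric.ball_subset_closedBall hx, Set.uIoc_subset_uIcc hs⟩
    · exact Filter.Eventually.of_forall fun s _ x _ => hgD x s
  rw [contDiff_one_iff_fderiv]
  refine ⟨fun x => (hderiv x).differentiableAt, ?_⟩
  rw [funext fun x => (hderiv x).fderiv]
  exact intervalIntegral.continuous_parametric_intervalIntegral_of_continuous' hD a b

theorem contDiff_one_intervalIntegral_from_zero {f : H → ℝ → E} {τ : H → ℝ}
    (hf : ContDiff ℝ 1 (Function.uncurry f)) (hτ : ContDiff ℝ 1 τ) :
    ContDiff ℝ 1 fun x => ∫ s in (0 : ℝ)..τ x, f x s := by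
  have hrescale (x : H) :
      ∫ s in (0 : ℝ)..τ x, f x s = ∫ σ in (0 : ℝ)..1, τ x • f x (τ x * σ) := by
    rw [intervalIntegral.integral_smul, intervalIntegral.smul_integral_comp_mul_left, mul_zero,
      mul_one]
  simp_rw [hrescale]
  refine contDiff_one_intervalIntegral_of_contDiff_uncurry ?_ 0 1
  exact (hτ.comp contDiff_fst).smul (hf.comp ((contDiff_fst).prodMk
    ((hτ.comp contDiff_fst).mul contDiff_snd)))

end ParametricIntegral

theorem deriv_line_eq_deriv_fst_sub_fderiv_snd {H G : Type*} [NormedAddCommGroup H]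
    [NormedSpace ℝ H] [NormedAddCommGroup G] [NormedSpace ℝ G] {F : ℝ × H → G} {t : ℝ} {x : H}
    (hF : DifferentiableAt ℝ F (t, x)) (w : H) :
    deriv (fun r => F (t + r, x - r • w)) 0 =
      deriv (fun τ => F (τ, x)) t - fderiv ℝ (fun y => F (t, y)) x w := by
  set L := fderiv ℝ F (t, x)
  have hline : HasDerivAt (fun r : ℝ => (t + r, x - r • w)) ((1 : ℝ), -w) 0 := by
    simpa using ((hasDerivAt_id (0 : ℝ)).const_add t).prodMk
      (((hasDerivAt_id (0 : ℝ)).smul_const w).const_sub x)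
  have hfst : HasDerivAt (fun τ => F (τ, x)) (L (1, 0)) t :=
    hF.hasFDerivAt.comp_hasDerivAt t ((hasDerivAt_id t).prodMk (hasDerivAt_const t x))
  have hsnd : HasFDerivAt (fun y => F (t, y)) (L.comp (ContinuousLinearMap.inr ℝ ℝ H)) x :=
    hF.hasFDerivAt.comp x (hasFDerivAt_prodMk_right t x)
  have hcomp : HasDerivAt (fun r => F (t + r, x - r • w)) (L (1, -w)) 0 :=
    hF.hasFDerivAt.comp_hasDerivAt_of_eq 0 hline (by simp)
  rw [hcomp.deriv, hfst.deriv, hsnd.fderiv]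
  rw [ContinuousLinearMap.comp_apply, ContinuousLinearMap.inr_apply, ← map_sub]
  simp

theorem sum_ofReal_mul_pderiv' {d : ℕ} (u : EuclideanSpace ℝ (Fin d) → ℂ)
    (x ξ : EuclideanSpace ℝ (Fin d)) :
    ∑ j : Fin d, (ξ j : ℂ) * pderiv' j u x = fderiv ℝ u x ξ := by
  conv_rhs => rw [← (EuclideanSpace.basisFun (Fin d) ℝ).sum_repr ξ]
  simp [pderiv', map_sum, Complex.real_smul]

section Amplitude

variable {d n : ℕ} {p T ε : ℝ} {ξ : EuclideanSpace ℝ (Fin d)}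
  {a₀ : SchwartzMap (EuclideanSpace ℝ (Fin d)) ℂ} {β : EuclideanSpace ℝ (Fin d) → ℝ}
  {c : ℕ → ℝ}

theorem aFun_zero (x : EuclideanSpace ℝ (Fin d)) : aFun d n p T ξ a₀ β c ε 0 x = a₀ x := by
  simp [aFun]

theorem norm_aFun (t : ℝ) (x : EuclideanSpace ℝ (Fin d)) :
    ‖aFun d n p T ξ a₀ β c ε t x‖ = ‖a₀ (x + (ε ^ ((1 : ℝ) - 2 * (n : ℝ)) * t) • ξ)‖ := by
  simp [aFun, Complex.norm_exp, Complex.mul_re]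

theorem contDiff_aFun (hβ : ContDiff ℝ 1 β)
    (hG : ContDiff ℝ 1 fun y => Gser c (ε ^ (2 * p) * ‖a₀ y‖ ^ 2)) :
    ContDiff ℝ 1 fun q : ℝ × EuclideanSpace ℝ (Fin d) => aFun d n p T ξ a₀ β c ε q.1 q.2 := by
  have ha₀ : ContDiff ℝ 1 a₀ := (a₀.smooth ⊤).of_le (mod_cast le_top)
  have hphase : ContDiff ℝ 1 fun q : ℝ × EuclideanSpace ℝ (Fin d) =>
      ∫ s in (0 : ℝ)..q.1, β (ε⁻¹ • q.2 + (ε ^ (-(2 * (n : ℝ))) * (q.1 - s)) • ξ - T • ξ) :=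
    contDiff_one_intervalIntegral_from_zero (hβ.comp (by fun_prop)) contDiff_fst
  have hy : ContDiff ℝ 1 fun q : ℝ × EuclideanSpace ℝ (Fin d) =>
      q.2 + (ε ^ ((1 : ℝ) - 2 * (n : ℝ)) * q.1) • ξ := by fun_prop
  have hofReal : ContDiff ℝ 1 ((↑) : ℝ → ℂ) := Complex.ofRealCLM.contDiff
  have hGy := hG.comp hy
  unfold aFun
  fun_prop

theorem aFun_add_sub_smul (hε : 0 < ε) (t r : ℝ) (x : EuclideanSpace ℝ (Fin d)) :
    aFun d n p T ξ a₀ β c ε (t + r) (x - r • (ε ^ ((1 : ℝ) - 2 * (n : ℝ)) • ξ)) =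
      a₀ (x + (ε ^ ((1 : ℝ) - 2 * (n : ℝ)) * t) • ξ) *
        Complex.exp (-Complex.I * Complex.ofReal (ε ^ (-(2 * (n : ℝ)))) *
          Complex.ofReal
            (Gser c (ε ^ (2 * p) * ‖a₀ (x + (ε ^ ((1 : ℝ) - 2 * (n : ℝ)) * t) • ξ)‖ ^ 2)) *
          Complex.ofReal (∫ s in (0 : ℝ)..t + r,
            β (ε⁻¹ • x + (ε ^ (-(2 * (n : ℝ))) * (t - s)) • ξ - T • ξ))) := by
  have hscale : ε⁻¹ * ε ^ ((1 : ℝ) - 2 * (n : ℝ)) = ε ^ (-(2 * (n : ℝ))) := by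
    rw [← Real.rpow_neg_one, ← Real.rpow_add hε]
    ring_nf
  have hy : x - r • (ε ^ ((1 : ℝ) - 2 * (n : ℝ)) • ξ) +
      (ε ^ ((1 : ℝ) - 2 * (n : ℝ)) * (t + r)) • ξ =
      x + (ε ^ ((1 : ℝ) - 2 * (n : ℝ)) * t) • ξ := by module
  have hz (s : ℝ) : ε⁻¹ • (x - r • (ε ^ ((1 : ℝ) - 2 * (n : ℝ)) • ξ)) +
      (ε ^ (-(2 * (n : ℝ))) * (t + r - s)) • ξ - T • ξ =
      ε⁻¹ • x + (ε ^ (-(2 * (n : ℝ))) * (t - s)) • ξ - T • ξ := by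
    linear_combination (norm := module) (-r) • hscale • ξ
  simp only [aFun, hy, hz]

theorem hasDerivAt_aFun_add_sub_smul (hε : 0 < ε) (hβ : Continuous β) (t : ℝ)
    (x : EuclideanSpace ℝ (Fin d)) :
    HasDerivAt
      (fun r => aFun d n p T ξ a₀ β c ε (t + r) (x - r • (ε ^ ((1 : ℝ) - 2 * (n : ℝ)) • ξ)))
      (-Complex.I * Complex.ofReal (ε ^ (-(2 * (n : ℝ)))) *
        Complex.ofReal (Gser c (ε ^ (2 * p) * ‖aFun d n p T ξ a₀ β c ε t x‖ ^ 2)) *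
        Complex.ofReal (β (ε⁻¹ • x - T • ξ)) * aFun d n p T ξ a₀ β c ε t x) 0 := by
  set f : ℝ → ℝ := fun s => β (ε⁻¹ • x + (ε ^ (-(2 * (n : ℝ))) * (t - s)) • ξ - T • ξ)
  have hf : Continuous f := by fun_prop
  have hprim : HasDerivAt (fun r => ∫ s in (0 : ℝ)..t + r, f s) (f t) 0 := by
    refine HasDerivAt.comp_const_add (f := fun u => ∫ s in (0 : ℝ)..u, f s) t 0 ?_
    simpa using (hf.integral_hasStrictDerivAt 0 t).hasDerivAt
  have hval : aFun d n p T ξ a₀ β c ε t x = aFun d n p T ξ a₀ β c ε (t + 0)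
      (x - (0 : ℝ) • (ε ^ ((1 : ℝ) - 2 * (n : ℝ)) • ξ)) := by simp
  simp_rw [aFun_add_sub_smul hε t _ x]
  refine ((hprim.ofReal_comp.const_mul _).cexp.const_mul _).congr_deriv ?_
  rw [norm_aFun, hval, aFun_add_sub_smul hε]
  simp [f]
  ring

end Amplitude

theorem stmt3_general (d n : ℕ) (p T ε : ℝ)
    (hε : 0 < ε)
    (ξ : EuclideanSpace ℝ (Fin d))
    (a₀ : SchwartzMap (EuclideanSpace ℝ (Fin d)) ℂ)
    (β : EuclideanSpace ℝ (Fin d) → ℝ) (hβ : ContDiff ℝ (⊤ : ℕ∞) β)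
    (c : ℕ → ℝ) (R : ℝ)
    (hconv : ∀ x : ℝ, |x| < R →
      Summable fun k : ℕ => |c (k + 1)| / (k + 1).factorial * |x| ^ (k + 1))
    (hsmall : (⨆ x : EuclideanSpace ℝ (Fin d), ε ^ (2 * p) * ‖a₀ x‖ ^ 2) < R) :
    ContDiff ℝ 1 (fun q : ℝ × EuclideanSpace ℝ (Fin d) => aFun d n p T ξ a₀ β c ε q.1 q.2) ∧
      (∀ x, aFun d n p T ξ a₀ β c ε 0 x = a₀ x) ∧
      ∀ (t : ℝ) (x : EuclideanSpace ℝ (Fin d)),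
        Complex.I * deriv (fun τ : ℝ => aFun d n p T ξ a₀ β c ε τ x) t -
          Complex.I * Complex.ofReal (ε ^ ((1 : ℝ) - 2 * (n : ℝ))) *
            (∑ j : Fin d, Complex.ofReal (ξ j) * pderiv' j (aFun d n p T ξ a₀ β c ε t) x) -
          Complex.ofReal (ε ^ (-(2 * (n : ℝ)))) * Complex.ofReal (β (ε⁻¹ • x - T • ξ)) *
            Complex.ofReal (Gser c (ε ^ (2 * p) * ‖aFun d n p T ξ a₀ β c ε t x‖ ^ 2)) *
            aFun d n p T ξ a₀ β c ε t x = 0 := by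
  have hβ1 : ContDiff ℝ 1 β := hβ.of_le (mod_cast le_top)
  have hεp : 0 ≤ ε ^ (2 * p) := Real.rpow_nonneg hε.le _
  have hG : ContDiff ℝ 1 fun y => Gser c (ε ^ (2 * p) * ‖a₀ y‖ ^ 2) := by
    refine contDiff_Gser_comp hconv (contDiff_const.mul ((contDiff_norm_sq ℝ).comp
      ((a₀.smooth ⊤).of_le (mod_cast le_top)))) fun y => ?_
    rw [abs_of_nonneg (by positivity)]
    exact (a₀.mul_norm_sq_le_iSup hεp y).trans_lt hsmall
  have hC1 := contDiff_aFun (n := n) (T := T) (ξ := ξ) hβ1 hG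
  refine ⟨hC1, aFun_zero, fun t x => ?_⟩
  have hline := deriv_line_eq_deriv_fst_sub_fderiv_snd (hC1.differentiable one_ne_zero (t, x))
    (ε ^ ((1 : ℝ) - 2 * (n : ℝ)) • ξ)
  rw [(hasDerivAt_aFun_add_sub_smul hε hβ.continuous t x).deriv, map_smul,
    Complex.real_smul] at hline
  dsimp only at hline
  rw [sum_ofReal_mul_pderiv']
  linear_combination (-Complex.I) * hline -
    Complex.ofReal (ε ^ (-(2 * (n : ℝ)))) * Complex.ofReal (β (ε⁻¹ • x - T • ξ)) *
      Complex.ofReal (Gser c (ε ^ (2 * p) * ‖aFun d n p T ξ a₀ β c ε t x‖ ^ 2)) *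
      aFun d n p T ξ a₀ β c ε t x * Complex.I_mul_I

/-- Let `d, n ≥ 1`, `p, T, ε > 0`, `|ξ| = 1`, `a₀` Schwartz, `β` smooth,
`G` converging absolutely for `|x| < R`, and assume `ε^{2p} sup_x |a₀(x)|² < R`. Then the
amplitude `a` is `C¹` on `ℝ × ℝ^d`, satisfies `a(0,·) = a₀`, and solves the transport
equation `i∂_t a − i ε^{1−2n} ξ·∇_x a − ε^{−2n} β(ε^{−1}x − Tξ) G(ε^{2p}|a|²) a = 0`. -/
theorem stmt3 (d n : ℕ) (hd : 1 ≤ d) (hn : 1 ≤ n) (p T ε : ℝ)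
    (hp : 0 < p) (hT : 0 < T) (hε : 0 < ε)
    (ξ : EuclideanSpace ℝ (Fin d)) (hξ : ‖ξ‖ = 1)
    (a₀ : SchwartzMap (EuclideanSpace ℝ (Fin d)) ℂ)
    (β : EuclideanSpace ℝ (Fin d) → ℝ) (hβ : ContDiff ℝ (⊤ : ℕ∞) β)
    (c : ℕ → ℝ) (R : ℝ) (hR : 0 < R)
    (hconv : ∀ x : ℝ, |x| < R →
      Summable fun k : ℕ => |c (k + 1)| / (k + 1).factorial * |x| ^ (k + 1))
    (hsmall : (⨆ x : EuclideanSpace ℝ (Fin d), ε ^ (2 * p) * ‖a₀ x‖ ^ 2) < R) :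
    ContDiff ℝ 1 (fun q : ℝ × EuclideanSpace ℝ (Fin d) => aFun d n p T ξ a₀ β c ε q.1 q.2) ∧
      (∀ x, aFun d n p T ξ a₀ β c ε 0 x = a₀ x) ∧
      ∀ (t : ℝ) (x : EuclideanSpace ℝ (Fin d)),
        Complex.I * deriv (fun τ : ℝ => aFun d n p T ξ a₀ β c ε τ x) t -
          Complex.I * Complex.ofReal (ε ^ ((1 : ℝ) - 2 * (n : ℝ))) *
            (∑ j : Fin d, Complex.ofReal (ξ j) * pderiv' j (aFun d n p T ξ a₀ β c ε t) x) -
          Complex.ofReal (ε ^ (-(2 * (n : ℝ)))) * Complex.ofReal (β (ε⁻¹ • x - T • ξ)) *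
            Complex.ofReal (Gser c (ε ^ (2 * p) * ‖aFun d n p T ξ a₀ β c ε t x‖ ^ 2)) *
            aFun d n p T ξ a₀ β c ε t x = 0 :=
  stmt3_general d n p T ε hε ξ a₀ β hβ c R hconv hsmall
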